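/- arXiv:1905.10504 — 4 statements merged into one kernel-verified Lean document; each statement's English description precedes it below -/
import Mathlib

section
/- Let n = 2k be even and m ≥ k. If F is an (n,m)-function such that the set S = {v ∈ F_2^m : x ↦ ⟨v, F(x)⟩ is not bent} has exactly 2^{m-k} elements, then S is an (m-k)-dimensional linear subspace of F_2^m. -/
open Finset

def chr (b : ZMod 2) : ℤ := if b = 0 then 1 else -1

def ip {n : ℕ} (a b : Fin n → ZMod 2) : ZMod 2 := ∑ i, a i * b i

def walshV {n : ℕ} (f : (Fin n → ZMod 2) → ZMod 2) (l : Fin n → ZMod 2) : ℤ :=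
  ∑ x, chr (f x + ip l x)

/-- `f` is bent on `F_2^{2k}`: all Walsh values are `±2^k`. -/
def IsBentV {n : ℕ} (k : ℕ) (f : (Fin n → ZMod 2) → ZMod 2) : Prop :=
  ∀ l, walshV f l = 2 ^ k ∨ walshV f l = -(2 ^ k)

/-!
If every nonzero `v` of a `(k+1)`-dimensional subspace `T` had a bent component `v·F`, then
summing the Walsh values at `0` over `T` would give, by orthogonality of characters, a multiple
of `|T| = 2^(k+1)`, while termwise it is `2^n + (2^(k+1) - 1)·(±2^k) ≡ -2^k (mod 2^(k+1))`
(Nyberg). So the non-bent set `S ∋ 0` meets every `(k+1)`-dimensional subspace nontrivially.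

For the equality case of Bose–Burton, note that as long as `dim T < k`, `|S + T| < |V|`, so a
subspace `T` with `T ∩ S = 0` can be enlarged, keeping this property, to dimension `k`. For such
`T` and `y ∉ T`, the subspace `T ⊔ ⟨y⟩` meets `S` off `T`, i.e. in `y + T`; thus `S` meets all
`2^(m-k) = |S|` cosets of `T`, each exactly once. If `a, b ∈ S` but `a + b ∉ S`, start the
enlargement from `⟨a + b⟩`: then `a` and `b` lie in one coset, so `a = b` and `a + b = 0 ∈ S`.
Hence `S` is a subgroup, i.e. a subspace, of size `2^(m-k)`.
-/

open Module Pointwise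

lemma zmod_two_eq_zero_or_eq_one (a : ZMod 2) : a = 0 ∨ a = 1 := by
  revert a; decide

def chrAddChar : AddChar (ZMod 2) ℤ where
  toFun := chr
  map_zero_eq_one' := rfl
  map_add_eq_mul' := by decide

lemma natCast_card_dvd_sum_chr {G : Type*} [AddCommGroup G] [Fintype G] (ℓ : G →+ ZMod 2) :
    (Fintype.card G : ℤ) ∣ ∑ g, chr (ℓ g) := by
  classical
  change _ ∣ ∑ g, chrAddChar.compAddMonoidHom ℓ g
  rw [AddChar.sum_eq_ite]
  split_ifs <;> simp

@[simp]
lemma ip_zero_left {m : ℕ} (y : Fin m → ZMod 2) : ip 0 y = 0 := by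
  simp [ip]

lemma walshV_zero_right {n : ℕ} (f : (Fin n → ZMod 2) → ZMod 2) :
    walshV f 0 = ∑ x, chr (f x) := by
  simp [walshV]

lemma walshV_zero_zero (n : ℕ) : walshV (fun _ : Fin n → ZMod 2 => 0) 0 = 2 ^ n := by
  simp [walshV_zero_right, chr]

lemma not_isBentV_zero {n k : ℕ} (hkn : k < n) : ¬ IsBentV k (fun _ : Fin n → ZMod 2 => 0) := by
  intro h
  have hlt : (2 : ℤ) ^ k < 2 ^ n := pow_lt_pow_right₀ (by norm_num) hkn
  have hpos : (0 : ℤ) < 2 ^ k := by positivity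
  rcases h 0 with h | h <;> rw [walshV_zero_zero] at h <;> omega

lemma two_pow_dvd_sum_walshV {n m : ℕ} (F : (Fin n → ZMod 2) → (Fin m → ZMod 2))
    (T : Submodule (ZMod 2) (Fin m → ZMod 2)) [Fintype T] :
    (2 ^ finrank (ZMod 2) T : ℤ) ∣ ∑ v : T, walshV (fun x => ip (v : Fin m → ZMod 2) (F x)) 0 := by
  simp only [walshV_zero_right]
  rw [Finset.sum_comm]
  refine Finset.dvd_sum fun x _ => ?_
  have hcard : Fintype.card T = 2 ^ finrank (ZMod 2) T := by
    rw [card_eq_pow_finrank (K := ZMod 2), ZMod.card]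
  exact_mod_cast hcard ▸ natCast_card_dvd_sum_chr
    (AddMonoidHom.mk' (fun v : T => ip (v : Fin m → ZMod 2) (F x))
      fun v w => by simp [ip, add_mul, Finset.sum_add_distrib])

lemma intCast_walshV_eq_two_pow {n k : ℕ} {f : (Fin n → ZMod 2) → ZMod 2} (hf : IsBentV k f)
    (l : Fin n → ZMod 2) : (walshV f l : ZMod (2 ^ (k + 1))) = 2 ^ k := by
  have h : (2 : ZMod (2 ^ (k + 1))) ^ k + 2 ^ k = 0 := by
    rw [← two_mul, ← pow_succ']
    exact_mod_cast ZMod.natCast_self (2 ^ (k + 1))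
  rcases hf l with hl | hl <;> rw [hl] <;> push_cast
  · rfl
  · exact neg_eq_of_add_eq_zero_left h

theorem exists_ne_zero_not_isBentV {n k m : ℕ} (hkn : k < n)
    (F : (Fin n → ZMod 2) → (Fin m → ZMod 2))
    (T : Submodule (ZMod 2) (Fin m → ZMod 2)) (hT : finrank (ZMod 2) T = k + 1) :
    ∃ v ∈ T, v ≠ 0 ∧ ¬ IsBentV k (fun x => ip v (F x)) := by
  classical
  by_contra! hbent
  have hR : (2 : ZMod (2 ^ (k + 1))) ^ (k + 1) = 0 := by
    exact_mod_cast ZMod.natCast_self (2 ^ (k + 1))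
  have hcard : Fintype.card T = 2 ^ (k + 1) := by
    rw [card_eq_pow_finrank (K := ZMod 2), ZMod.card, hT]
  set W : T → ℤ := fun v => walshV (fun x => ip (v : Fin m → ZMod 2) (F x)) 0
  have hsum : ((∑ v, W v : ℤ) : ZMod (2 ^ (k + 1))) = 0 := by
    have hdvd := two_pow_dvd_sum_walshV F T
    rw [hT] at hdvd
    exact (ZMod.intCast_zmod_eq_zero_iff_dvd _ _).2 (by exact_mod_cast hdvd)
  have hW0 : (W 0 : ZMod (2 ^ (k + 1))) = 0 := by
    simp only [W, Submodule.coe_zero, ip_zero_left, walshV_zero_zero]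
    push_cast
    rw [show n = (k + 1) + (n - (k + 1)) by omega, pow_add (2 : ZMod (2 ^ (k + 1))), hR,
      zero_mul]
  have hW : ∀ v ∈ Finset.univ.erase (0 : T), (W v : ZMod (2 ^ (k + 1))) = 2 ^ k :=
    fun v hv => intCast_walshV_eq_two_pow
      (hbent v v.2 (by simpa [← Subtype.ext_iff] using Finset.ne_of_mem_erase hv)) 0
  -- splitting off `v = 0`, the sum becomes `(2^(k+1) - 1) • 2^k = -2^k`
  rw [Int.cast_sum, ← Finset.add_sum_erase _ _ (Finset.mem_univ 0), hW0, zero_add,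
    Finset.sum_congr rfl hW, Finset.sum_const, Finset.card_erase_of_mem (Finset.mem_univ 0),
    Finset.card_univ, hcard, nsmul_eq_mul, Nat.cast_sub Nat.one_le_two_pow] at hsum
  push_cast at hsum
  rw [hR, zero_sub, neg_one_mul, neg_eq_zero] at hsum
  have hdvd := (ZMod.natCast_eq_zero_iff (2 ^ k) (2 ^ (k + 1))).1 (by exact_mod_cast hsum)
  exact absurd ((Nat.pow_dvd_pow_iff_le_right (by norm_num)).1 hdvd) (by omega)

section BoseBurton

variable {V : Type*} [AddCommGroup V] [Module (ZMod 2) V] [Module.Finite (ZMod 2) V]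

lemma natCard_eq_two_pow_finrank (V : Type*) [AddCommGroup V] [Module (ZMod 2) V]
    [Module.Finite (ZMod 2) V] : Nat.card V = 2 ^ finrank (ZMod 2) V := by
  have : Finite V := Module.finite_of_finite (ZMod 2)
  have : Fintype V := Fintype.ofFinite V
  rw [Nat.card_eq_fintype_card, card_eq_pow_finrank (K := ZMod 2), ZMod.card]

omit [Module.Finite (ZMod 2) V] in
lemma add_self_eq_zero_of_zmod_two (v : V) : v + v = 0 := by
  rw [← two_smul (ZMod 2), show (2 : ZMod 2) = 0 from rfl, zero_smul]

omit [Module.Finite (ZMod 2) V] in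
lemma neg_eq_self_of_zmod_two (v : V) : -v = v :=
  neg_eq_of_add_eq_zero_left (add_self_eq_zero_of_zmod_two v)

omit [Module.Finite (ZMod 2) V] in
lemma mem_sup_span_singleton_iff {T : Submodule (ZMod 2) V} {y v : V} :
    v ∈ T ⊔ Submodule.span (ZMod 2) {y} ↔ v ∈ T ∨ v - y ∈ T := by
  constructor
  · rintro hv
    obtain ⟨t, ht, s, hs, rfl⟩ := Submodule.mem_sup.1 hv
    obtain ⟨c, rfl⟩ := Submodule.mem_span_singleton.1 hs
    rcases zmod_two_eq_zero_or_eq_one c with rfl | rfl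
    · exact Or.inl (by simpa using ht)
    · exact Or.inr (by simpa using ht)
  · rintro (hv | hv)
    · exact Submodule.mem_sup_left hv
    · simpa using Submodule.add_mem_sup hv (Submodule.mem_span_singleton_self y)

def MeetsAllOfFinrank (A : Set V) (j : ℕ) : Prop :=
  ∀ T : Submodule (ZMod 2) V, finrank (ZMod 2) T = j → ∃ v ∈ T, v ≠ 0 ∧ v ∈ A

lemma exists_notMem_sup_span_singleton_inter_subset {A : Set V} (h0 : (0 : V) ∈ A)
    {T : Submodule (ZMod 2) V} (hTA : (T : Set V) ∩ A ⊆ {0})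
    (hlt : Nat.card A * 2 ^ finrank (ZMod 2) T < Nat.card V) :
    ∃ y ∉ T, ((T ⊔ Submodule.span (ZMod 2) {y} : Submodule (ZMod 2) V) : Set V) ∩ A ⊆ {0} := by
  have hne : A + (T : Set V) ≠ Set.univ := by
    intro h
    have := Set.natCard_add_le (s := A) (t := (T : Set V))
    rw [h, Nat.card_univ, SetLike.coe_sort_coe, natCard_eq_two_pow_finrank T] at this
    omega
  obtain ⟨y, hy⟩ := (Set.ne_univ_iff_exists_notMem _).1 hne
  refine ⟨y, fun hyT => hy ⟨0, h0, y, hyT, zero_add y⟩, ?_⟩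
  rintro v ⟨hv, hvA⟩
  rcases mem_sup_span_singleton_iff.1 hv with hvT | hvy
  · exact hTA ⟨hvT, hvA⟩
  · exact absurd ⟨v, hvA, y - v, by simpa using T.neg_mem hvy, add_sub_cancel v y⟩ hy

lemma exists_le_finrank_eq_inter_subset {A : Set V} {k : ℕ} (h0 : (0 : V) ∈ A)
    (hkn : k ≤ finrank (ZMod 2) V) (hcard : Nat.card A ≤ 2 ^ (finrank (ZMod 2) V - k))
    {T : Submodule (ZMod 2) V} (hTk : finrank (ZMod 2) T ≤ k) (hTA : (T : Set V) ∩ A ⊆ {0}) :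
    ∃ T' : Submodule (ZMod 2) V, T ≤ T' ∧ finrank (ZMod 2) T' = k ∧ (T' : Set V) ∩ A ⊆ {0} := by
  obtain ⟨d, hd⟩ := Nat.exists_eq_add_of_le hTk
  induction d generalizing T with
  | zero => exact ⟨T, le_rfl, hd.symm, hTA⟩
  | succ d ih =>
    have hlt : Nat.card A * 2 ^ finrank (ZMod 2) T < Nat.card V := by
      rw [natCard_eq_two_pow_finrank V]
      calc Nat.card A * 2 ^ finrank (ZMod 2) T
          ≤ 2 ^ (finrank (ZMod 2) V - k) * 2 ^ finrank (ZMod 2) T := Nat.mul_le_mul_right _ hcard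
        _ < 2 ^ finrank (ZMod 2) V := by
          rw [← pow_add]; exact Nat.pow_lt_pow_right (by norm_num) (by omega)
    obtain ⟨y, hyT, hyA⟩ := exists_notMem_sup_span_singleton_inter_subset h0 hTA hlt
    obtain ⟨T', hle, hT'⟩ := ih (by rw [Submodule.finrank_sup_span_singleton hyT]; omega) hyA
      (by rw [Submodule.finrank_sup_span_singleton hyT]; omega)
    exact ⟨T', le_sup_left.trans hle, hT'⟩

section Transversal

variable {A : Set V} {k : ℕ} (h0 : (0 : V) ∈ A) (hmeet : MeetsAllOfFinrank A (k + 1))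
  {T : Submodule (ZMod 2) V} (hT : finrank (ZMod 2) T = k) (hTA : (T : Set V) ∩ A ⊆ {0})
include h0 hmeet hT hTA

lemma exists_mem_sub_mem (y : V) : ∃ a ∈ A, a - y ∈ T := by
  by_cases hyT : y ∈ T
  · exact ⟨0, h0, by simpa using T.neg_mem hyT⟩
  obtain ⟨v, hv, hv0, hvA⟩ :=
    hmeet (T ⊔ Submodule.span (ZMod 2) {y}) (by rw [Submodule.finrank_sup_span_singleton hyT, hT])
  rcases mem_sup_span_singleton_iff.1 hv with hvT | hvy
  · exact absurd (hTA ⟨hvT, hvA⟩) hv0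
  · exact ⟨v, hvA, hvy⟩

lemma eq_of_sub_mem (hcard : Nat.card A = 2 ^ (finrank (ZMod 2) V - k)) {a b : V}
    (ha : a ∈ A) (hb : b ∈ A) (hab : a - b ∈ T) : a = b := by
  have : Finite V := Module.finite_of_finite (ZMod 2)
  let f : A → V ⧸ T := fun a => T.mkQ a
  have hsurj : Function.Surjective f := by
    intro q
    obtain ⟨y, rfl⟩ := T.mkQ_surjective q
    obtain ⟨a, ha, hay⟩ := exists_mem_sub_mem h0 hmeet hT hTA y
    exact ⟨⟨a, ha⟩, (Submodule.Quotient.eq T).2 hay⟩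
  have hquot : Nat.card (V ⧸ T) = 2 ^ (finrank (ZMod 2) V - k) := by
    rw [natCard_eq_two_pow_finrank, ← T.finrank_quotient_add_finrank, hT, Nat.add_sub_cancel]
  have hinj := (hsurj.bijective_of_nat_card_le (hcard.trans hquot.symm).le).injective
  exact congrArg Subtype.val (@hinj ⟨a, ha⟩ ⟨b, hb⟩ ((Submodule.Quotient.eq T).2 hab))

end Transversal

variable {A : Set V} {k : ℕ} (hk : 0 < k) (hkn : k ≤ finrank (ZMod 2) V) (h0 : (0 : V) ∈ A)
  (hcard : Nat.card A = 2 ^ (finrank (ZMod 2) V - k)) (hmeet : MeetsAllOfFinrank A (k + 1))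
include hk hkn h0 hcard hmeet

lemma add_mem_of_meetsAllOfFinrank {a b : V} (ha : a ∈ A) (hb : b ∈ A) : a + b ∈ A := by
  by_contra hab
  have hab0 : a + b ≠ 0 := fun h => hab (h ▸ h0)
  have hspan : ((Submodule.span (ZMod 2) {a + b} : Submodule (ZMod 2) V) : Set V) ∩ A ⊆ {0} := by
    rintro v ⟨hv, hvA⟩
    obtain ⟨c, rfl⟩ := Submodule.mem_span_singleton.1 hv
    rcases zmod_two_eq_zero_or_eq_one c with rfl | rfl
    · simp
    · exact absurd (by simpa using hvA) hab
  obtain ⟨T, hle, hT, hTA⟩ := exists_le_finrank_eq_inter_subset h0 hkn hcard.le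
    (by rw [finrank_span_singleton hab0]; omega) hspan
  have hsub : a - b ∈ T := by
    rw [sub_eq_add_neg, neg_eq_self_of_zmod_two]
    exact hle (Submodule.mem_span_singleton_self _)
  obtain rfl := eq_of_sub_mem h0 hmeet hT hTA hcard ha hb hsub
  exact hab0 (add_self_eq_zero_of_zmod_two a)

theorem exists_submodule_coe_eq_of_meetsAllOfFinrank :
    ∃ W : Submodule (ZMod 2) V, (W : Set V) = A ∧ finrank (ZMod 2) W = finrank (ZMod 2) V - k := by
  let W : Submodule (ZMod 2) V :=
    { carrier := A
      add_mem' := add_mem_of_meetsAllOfFinrank hk hkn h0 hcard hmeet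
      zero_mem' := h0
      smul_mem' := fun c v hv => by
        rcases zmod_two_eq_zero_or_eq_one c with rfl | rfl
        · simpa using h0
        · simpa using hv }
  refine ⟨W, rfl, Nat.pow_right_injective le_rfl ?_⟩
  change 2 ^ _ = 2 ^ _
  rw [← natCard_eq_two_pow_finrank, ← hcard]
  rfl

end BoseBurton

theorem stmt1 (k m : ℕ) (hk : 0 < k) (hm : k ≤ m)
    (F : (Fin (2 * k) → ZMod 2) → (Fin m → ZMod 2))
    (hcard :
      Nat.card {v : Fin m → ZMod 2 | ¬ IsBentV k (fun x => ip v (F x))} = 2 ^ (m - k)) :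
    ∃ W : Submodule (ZMod 2) (Fin m → ZMod 2),
      (W : Set (Fin m → ZMod 2)) =
        {v : Fin m → ZMod 2 | ¬ IsBentV k (fun x => ip v (F x))} ∧
      Module.finrank (ZMod 2) W = m - k := by
  have hkn : k < 2 * k := by omega
  have h0 : (0 : Fin m → ZMod 2) ∈ {v | ¬ IsBentV k (fun x => ip v (F x))} := by
    simpa only [Set.mem_ofPred_eq, ip_zero_left] using not_isBentV_zero hkn
  have hmeet : MeetsAllOfFinrank {v | ¬ IsBentV k (fun x => ip v (F x))} (k + 1) :=
    fun T hT => exists_ne_zero_not_isBentV hkn F T hT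
  have hrank : finrank (ZMod 2) (Fin m → ZMod 2) = m := by simp
  simpa only [hrank] using exists_submodule_coe_eq_of_meetsAllOfFinrank hk (by rwa [hrank]) h0
    (by rwa [hrank]) hmeet
end

section
/- Let n = 2k and m ≥ k. If F is an (n,m)-function with the maximal number 2^m - 2^{m-k} of bent components, then the algebraic degree of F is at most k. -/
open Finset

/-- The algebraic degree (of the algebraic normal form) of `f` is at most `d`. -/
def DegLE {n : ℕ} (f : (Fin n → ZMod 2) → ZMod 2) (d : ℕ) : Prop :=
  ∃ c : Finset (Fin n) → ZMod 2,
    (∀ S : Finset (Fin n), c S ≠ 0 → S.card ≤ d) ∧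
    ∀ x, f x = ∑ S : Finset (Fin n), c S * ∏ i ∈ S, x i

/-! The components `v·F` are bent for `v` in a set `B` of `2^m - 2^(m-k)` nonzero vectors, at
least half of `F_2^m`; so for each unit vector `e_j` either `e_j ∈ B`, or `B` and `B + e_j` meet
and the coordinate `F_j = v·F + (v + e_j)·F` is a sum of two bent components.

A bent `f` on `F_2^(2k)`, `k ≥ 2`, has degree at most `k`: its ANF coefficient at `S` is the
parity of the weight `N` of `f` on the subcube `{x ⪯ S}`. Poisson summation against the
complementary subcube, where all Walsh values are `±2^k`, gives
`2^(r+1) N = 2^(2k) - 2^(k+r) + 2^(k+1) M` with `r = 2k - #S` and `M` the weight of the dual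
function there; for `#S > k` every term on the right is divisible by `2^(r+2)`, so `N` is even. -/

lemma chr_add (a b : ZMod 2) : chr (a + b) = chr a * chr b := by
  revert a b; decide

lemma chr_eq_one_sub_two_mul_val (a : ZMod 2) : chr a = 1 - 2 * a.val := by
  revert a; decide

lemma chr_sum {ι : Type*} (s : Finset ι) (g : ι → ZMod 2) :
    chr (∑ i ∈ s, g i) = ∏ i ∈ s, chr (g i) := by
  classical
  induction s using Finset.induction_on with
  | empty => rfl
  | insert a s ha ih => rw [sum_insert ha, prod_insert ha, chr_add, ih]

lemma sum_chr_eq_card_sub {ι : Type*} (E : Finset ι) (g : ι → ZMod 2) :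
    ∑ x ∈ E, chr (g x) = #E - 2 * ∑ x ∈ E, ((g x).val : ℤ) := by
  simp only [chr_eq_one_sub_two_mul_val, sum_sub_distrib, ← mul_sum, sum_const, nsmul_one]

lemma sum_eq_natCast_sum_val {ι : Type*} (E : Finset ι) (g : ι → ZMod 2) :
    ∑ x ∈ E, g x = ((∑ x ∈ E, (g x).val : ℕ) : ZMod 2) := by
  simp

lemma ip_comm {n : ℕ} (a b : Fin n → ZMod 2) : ip a b = ip b a := by
  simp only [ip, mul_comm]

lemma ip_add_left {n : ℕ} (a b x : Fin n → ZMod 2) : ip (a + b) x = ip a x + ip b x := by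
  simp only [ip, Pi.add_apply, add_mul, sum_add_distrib]

lemma ip_single_left {n : ℕ} (j : Fin n) (x : Fin n → ZMod 2) : ip (Pi.single j 1) x = x j := by
  simp [ip, Pi.single_apply, ite_mul]

def cube {n : ℕ} (S : Finset (Fin n)) : Finset (Fin n → ZMod 2) :=
  Fintype.piFinset fun i => if i ∈ S then univ else {0}

lemma mem_cube {n : ℕ} {S : Finset (Fin n)} {x : Fin n → ZMod 2} :
    x ∈ cube S ↔ ∀ i ∉ S, x i = 0 := by
  simp only [cube, Fintype.mem_piFinset]
  refine forall_congr' fun i => ?_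
  by_cases hi : i ∈ S <;> simp [hi]

lemma card_cube {n : ℕ} (S : Finset (Fin n)) : #(cube S) = 2 ^ #S := by
  simp [cube, apply_ite Finset.card, prod_ite_mem]

lemma sum_cube_chr_ip {n : ℕ} (S : Finset (Fin n)) (l : Fin n → ZMod 2) :
    ∑ x ∈ cube S, chr (ip l x) = if l ∈ cube Sᶜ then 2 ^ #S else 0 := by
  have hfactor : ∀ i, ∑ a ∈ (if i ∈ S then univ else {0}), chr (l i * a) =
      if i ∈ S then (if l i = 0 then 2 else 0) else 1 := by
    intro i
    by_cases hi : i ∈ S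
    · simp only [hi, if_true]; generalize l i = b; revert b; decide
    · simp [hi, chr]
  simp only [ip, chr_sum]
  rw [cube, ← prod_univ_sum _ fun i a => chr (l i * a), Fintype.prod_congr _ _ hfactor,
    prod_ite_mem, univ_inter, prod_ite_zero, prod_const]
  simp only [mem_cube, mem_compl, not_not]
  congr

lemma prod_one_add_eq_ite {ι : Type*} (T : Finset ι) (a : ι → ZMod 2) :
    ∏ i ∈ T, (1 + a i) = if ∀ i ∈ T, a i = 0 then 1 else 0 := by
  split_ifs with h
  · exact prod_eq_one fun i hi => by rw [h i hi, add_zero]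
  · obtain ⟨i, hi, hai⟩ := not_forall₂.mp h
    refine prod_eq_zero hi ?_
    generalize a i = b at hai; revert b; decide

def anf {n : ℕ} (f : (Fin n → ZMod 2) → ZMod 2) (S : Finset (Fin n)) : ZMod 2 :=
  ∑ y ∈ cube S, f y

/-- Möbius inversion on the Boolean lattice; the Kronecker delta `[x = y]` is `∏ i, (1 + x i + y i)`,
which expands over the subsets `S` of coordinates. -/
lemma eq_sum_anf_mul_prod {n : ℕ} (f : (Fin n → ZMod 2) → ZMod 2) (x : Fin n → ZMod 2) :
    f x = ∑ S : Finset (Fin n), anf f S * ∏ i ∈ S, x i := by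
  classical
  have hdelta : ∀ y, ∏ i, (x i + (1 + y i)) = if x = y then 1 else 0 := fun y => by
    simp only [add_left_comm (x _), prod_one_add_eq_ite, mem_univ, true_implies,
      CharTwo.add_eq_zero, funext_iff]
  have hanf : ∀ S, ∑ y, f y * ∏ i ∈ univ \ S, (1 + y i) = anf f S := fun S => by
    simp only [prod_one_add_eq_ite, mul_ite, mul_one, mul_zero, ← sum_filter, anf, mem_sdiff,
      mem_univ, true_and]
    congr 1
    ext y
    simp [mem_cube]
  calc f x = ∑ y, f y * if x = y then 1 else 0 := by simp
    _ = ∑ y, ∑ S, f y * ((∏ i ∈ S, x i) * ∏ i ∈ univ \ S, (1 + y i)) := by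
      simp only [← hdelta, prod_add, powerset_univ, mul_sum]
    _ = ∑ S : Finset (Fin n), anf f S * ∏ i ∈ S, x i := by
      rw [sum_comm]
      simp only [← hanf, sum_mul]
      exact sum_congr rfl fun S _ => sum_congr rfl fun y _ => by ring

lemma DegLE.add {n d : ℕ} {f g : (Fin n → ZMod 2) → ZMod 2} (hf : DegLE f d) (hg : DegLE g d) :
    DegLE (f + g) d := by
  obtain ⟨c, hc, hfc⟩ := hf
  obtain ⟨c', hc', hgc⟩ := hg
  refine ⟨c + c', fun S hS => ?_, fun x => ?_⟩
  · by_cases h : c S = 0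
    · exact hc' S fun h' => hS (by simp [h, h'])
    · exact hc S h
  · simp only [Pi.add_apply, hfc, hgc, add_mul, sum_add_distrib]

lemma sum_walshV_cube_compl {n : ℕ} (f : (Fin n → ZMod 2) → ZMod 2) (S : Finset (Fin n)) :
    ∑ l ∈ cube Sᶜ, walshV f l = 2 ^ #Sᶜ * ∑ x ∈ cube S, chr (f x) := by
  calc ∑ l ∈ cube Sᶜ, walshV f l = ∑ x, chr (f x) * ∑ l ∈ cube Sᶜ, chr (ip x l) := by
        simp only [walshV, chr_add, mul_sum]
        rw [sum_comm]
        exact sum_congr rfl fun x _ => sum_congr rfl fun l _ => by rw [ip_comm]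
    _ = ∑ x, if x ∈ cube S then chr (f x) * 2 ^ #Sᶜ else 0 := by
        simp only [sum_cube_chr_ip, compl_compl, mul_ite, mul_zero]
    _ = 2 ^ #Sᶜ * ∑ x ∈ cube S, chr (f x) := by
        rw [sum_ite_mem, univ_inter, ← sum_mul, mul_comm]

lemma IsBentV.exists_dual {n k : ℕ} {f : (Fin n → ZMod 2) → ZMod 2} (hf : IsBentV k f) :
    ∃ g : (Fin n → ZMod 2) → ZMod 2, ∀ l, walshV f l = 2 ^ k * chr (g l) := by
  refine ⟨fun l => if walshV f l = 2 ^ k then 0 else 1, fun l => ?_⟩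
  rcases hf l with h | h
  · simp [h, chr]
  · have : walshV f l ≠ 2 ^ k := by rw [h]; linarith [pow_pos (two_pos : (0 : ℤ) < 2) k]
    simpa [this, chr] using h

lemma IsBentV.anf_eq_zero {k : ℕ} (hk : 2 ≤ k) {f : (Fin (2 * k) → ZMod 2) → ZMod 2}
    (hf : IsBentV k f) {S : Finset (Fin (2 * k))} (hS : k < #S) : anf f S = 0 := by
  obtain ⟨g, hg⟩ := hf.exists_dual
  set N := ∑ x ∈ cube S, (f x).val
  set M := ∑ l ∈ cube Sᶜ, (g l).val
  set r := #Sᶜ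
  have hrs : r + #S = 2 * k := by simp [r, card_compl_add_card]
  have hweight : (2 : ℤ) ^ (r + 1) * N = 2 ^ (2 * k) - 2 ^ (k + r) + 2 ^ (k + 1) * M := by
    have h := sum_walshV_cube_compl f S
    simp only [hg, ← mul_sum, sum_chr_eq_card_sub, card_cube] at h
    rw [← hrs]
    push_cast [N, M] at h ⊢
    linear_combination h
  have hdvd : (2 : ℤ) ^ (r + 1) * 2 ∣ 2 ^ (r + 1) * N := by
    rw [← pow_succ, hweight]
    exact dvd_add (dvd_sub (pow_dvd_pow 2 (by omega)) (pow_dvd_pow 2 (by omega)))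
      (dvd_mul_of_dvd_left (pow_dvd_pow 2 (by omega)) _)
  have hN : (2 : ℤ) ∣ N := (mul_dvd_mul_iff_left (by positivity)).mp hdvd
  rw [anf, sum_eq_natCast_sum_val, ZMod.natCast_eq_zero_iff]
  exact_mod_cast hN

lemma IsBentV.degLE {k : ℕ} (hk : 2 ≤ k) {f : (Fin (2 * k) → ZMod 2) → ZMod 2}
    (hf : IsBentV k f) : DegLE f k :=
  ⟨anf f, fun _ hS => not_lt.mp fun h => hS (hf.anf_eq_zero hk h), eq_sum_anf_mul_prod f⟩

lemma exists_add_mem_of_card_le {G : Type*} [AddGroup G] [Fintype G] {B : Finset G} {e : G}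
    (h0 : 0 ∉ B) (he : -e ∉ B) (hcard : Fintype.card G ≤ 2 * #B) : ∃ v ∈ B, v + e ∈ B := by
  classical
  by_contra! hB
  have hdisj : Disjoint B (B.map (addRightEmbedding e)) := by
    simp only [disjoint_right, mem_map, addRightEmbedding_apply]
    rintro _ ⟨v, hv, rfl⟩
    exact hB v hv
  have hsub : B ∪ B.map (addRightEmbedding e) ⊆ univ.erase 0 := by
    intro w hw
    simp only [mem_union, mem_map, addRightEmbedding_apply] at hw
    refine mem_erase.mpr ⟨?_, mem_univ w⟩
    rintro rfl
    obtain h | ⟨v, hv, hve⟩ := hw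
    · exact h0 h
    · exact he (by rwa [← eq_neg_of_add_eq_zero_left hve])
  have := card_le_card hsub
  rw [card_union_of_disjoint hdisj, card_map, card_erase_of_mem (mem_univ _), card_univ] at this
  have := Fintype.card_pos (α := G)
  omega

theorem stmt3_general (k m : ℕ) (hk : 2 ≤ k)
    (F : (Fin (2 * k) → ZMod 2) → (Fin m → ZMod 2))
    (hmax :
      Nat.card {v : Fin m → ZMod 2 | v ≠ 0 ∧ IsBentV k (fun x => ip v (F x))} =
        2 ^ m - 2 ^ (m - k)) :
    ∀ j : Fin m, DegLE (fun x => F x j) k := by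
  classical
  intro j
  set B := univ.filter fun v : Fin m → ZMod 2 => v ≠ 0 ∧ IsBentV k fun x => ip v (F x)
  have hB : #B = 2 ^ m - 2 ^ (m - k) := by
    rw [← hmax, Nat.card_eq_fintype_card, Fintype.card_subtype]
    rfl
  have hcomp : ∀ v ∈ B, DegLE (fun x => ip v (F x)) k :=
    fun v hv => (mem_filter.mp hv).2.2.degLE hk
  set e : Fin m → ZMod 2 := Pi.single j 1
  have hFj : (fun x => F x j) = fun x => ip e (F x) :=
    funext fun x => (ip_single_left j (F x)).symm
  rw [hFj]
  by_cases he : e ∈ B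
  · exact hcomp e he
  have hcard : Fintype.card (Fin m → ZMod 2) ≤ 2 * #B := by
    have : 2 ^ (m - k) * 2 ≤ 2 ^ m := by
      rw [← pow_succ]; exact Nat.pow_le_pow_right two_pos (by have := j.pos; omega)
    simp only [Fintype.card_fun, ZMod.card, Fintype.card_fin, hB]
    omega
  have hneg : -e = e := funext fun i => ZMod.neg_eq_self_mod_two (e i)
  obtain ⟨v, hv, hve⟩ := exists_add_mem_of_card_le (by simp [B]) (hneg ▸ he) hcard
  have hsplit : (fun x => ip e (F x)) = (fun x => ip v (F x)) + fun x => ip (v + e) (F x) :=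
    funext fun x => by
      rw [Pi.add_apply, ip_add_left, ← add_assoc, CharTwo.add_self_eq_zero, zero_add]
  exact hsplit ▸ (hcomp v hv).add (hcomp _ hve)

theorem stmt3 (k m : ℕ) (hk : 2 ≤ k) (hm : k ≤ m)
    (F : (Fin (2 * k) → ZMod 2) → (Fin m → ZMod 2))
    (hmax :
      Nat.card {v : Fin m → ZMod 2 | v ≠ 0 ∧ IsBentV k (fun x => ip v (F x))} =
        2 ^ m - 2 ^ (m - k)) :
    ∀ j : Fin m, DegLE (fun x => F x j) k :=
  stmt3_general k m hk F hmax
end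

section
/- Let n = 2k and F(x) = x^{d(2^k+1)} on F_{2^n}. If Tr^n_1(αF(x)) is bent for every α ∈ F_{2^n} \ F_{2^k}, then gcd(d, 2^k - 1) = 1, i.e., y ↦ y^d is a permutation of F_{2^k}. -/
/-! Only the Walsh value at `0` is needed. Write `q = 2^k` and realise `F_q^*` as the kernel of
`u ↦ u^(q-1)` on the cyclic group `K^*` of order `(q+1)(q-1)`. The norm `x ↦ x^(q+1)` maps `K^*`
onto `F_q^*` with fibres of size `q+1`, so for `α ∉ F_q` the Walsh value at `0` is
`1 + (q+1) S(α)` with `S(α) = ∑_{u ∈ F_q^*} χ(Tr(α u^d))`, and bentness (`= ±q`) forces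
`S(α) = -1`. On the other hand `u ↦ u^d` is `gcd(d, q-1)`-to-one on the cyclic group `F_q^*`,
so `gcd(d, q-1)` divides `S(α) = -1`. -/

open Finset

variable {K : Type*} [Field K] [Fintype K] [Algebra (ZMod 2) K]

/-- The absolute trace `Tr^n_1 : F_{2^n} → F_2`. -/
noncomputable def tr (x : K) : ZMod 2 := Algebra.trace (ZMod 2) K x

/-- The Walsh transform of a Boolean function `f` on `K = F_{2^n}`. -/
noncomputable def walshF (f : K → ZMod 2) (l : K) : ℤ :=
  ∑ x, chr (f x + tr (l * x))

/-- `f` is bent on `K = F_{2^{2k}}`: all Walsh values are `±2^k`. -/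
def IsBentF (k : ℕ) (f : K → ZMod 2) : Prop :=
  ∀ l : K, walshF f l = 2 ^ k ∨ walshF f l = -(2 ^ k)

theorem MonoidHom.sum_comp_eq_card_ker_nsmul {G H M : Type*} [Group G] [Fintype G] [Group H]
    [DecidableEq H] [AddCommMonoid M] (φ : G →* H) (f : H → M) :
    ∑ x, f (φ x) = Nat.card φ.ker • ∑ y : φ.range, f y := by
  classical
  have hfiber (y : φ.range) : #{x | φ.rangeRestrict x = y} = Nat.card φ.ker := by
    rw [← φ.ker_rangeRestrict,
      ← Nat.card_congr (fiberEquivKerOfSurjective φ.rangeRestrict_surjective y),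
      Nat.card_eq_card_toFinset]
    simp
  calc ∑ x, f (φ x) = ∑ y : φ.range, ∑ x with φ.rangeRestrict x = y, f y := by
        rw [← Finset.sum_fiberwise univ φ.rangeRestrict]
        refine sum_congr rfl fun y _ => sum_congr rfl fun x hx => ?_
        rw [← (Finset.mem_filter.mp hx).2]
        rfl
    _ = Nat.card φ.ker • ∑ y : φ.range, f y := by
        simp only [sum_const, hfiber, smul_sum]

namespace IsCyclic

variable {G : Type*} [CommGroup G] [IsCyclic G]

theorem range_powMonoidHom_eq_ker [Finite G] {m n : ℕ} (h : Nat.card G = m * n) :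
    (powMonoidHom m : G →* G).range = (powMonoidHom n).ker := by
  have hm : m ≠ 0 := by rintro rfl; exact Nat.card_pos.ne' (h.trans (zero_mul n))
  refine Subgroup.eq_of_le_of_card_ge ?_ ?_
  · rintro _ ⟨x, rfl⟩
    simp [← pow_mul, ← h, pow_card_eq_one']
  · rw [card_powMonoidHom_ker, card_powMonoidHom_range, h, Nat.gcd_mul_left_left,
      Nat.gcd_mul_right_left, Nat.mul_div_cancel_left _ (Nat.pos_of_ne_zero hm)]

theorem sum_comp_pow_eq_nsmul_sum_ker [Fintype G] [DecidableEq G] {M : Type*} [AddCommMonoid M]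
    {m n : ℕ} (h : Nat.card G = m * n) (f : G → M) :
    ∑ x, f (x ^ m) = m • ∑ y : (powMonoidHom n : G →* G).ker, f y := by
  calc ∑ x, f (x ^ m)
      = Nat.card (powMonoidHom m : G →* G).ker •
          ∑ y : (powMonoidHom m : G →* G).range, f y :=
        (powMonoidHom m).sum_comp_eq_card_ker_nsmul f
    _ = m • ∑ y : (powMonoidHom n : G →* G).ker, f y := by
        rw [card_powMonoidHom_ker, h, Nat.gcd_mul_right_left]
        exact congrArg _ (Fintype.sum_equiv
          (MulEquiv.subgroupCongr (range_powMonoidHom_eq_ker h)).toEquiv _ _ fun _ => rfl)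

theorem gcd_card_dvd_sum_comp_pow [Fintype G] {R : Type*} [Semiring R] (d : ℕ) (f : G → R) :
    ((Nat.card G).gcd d : R) ∣ ∑ u, f (u ^ d) := by
  classical
  have h := (powMonoidHom d : G →* G).sum_comp_eq_card_ker_nsmul f
  simp only [powMonoidHom_apply] at h
  rw [h, card_powMonoidHom_ker, nsmul_eq_mul]
  exact dvd_mul_right _ _

end IsCyclic

theorem pow_pred_eq_one_of_pow_eq_self {M₀ : Type*} [MonoidWithZero M₀]
    [IsRightCancelMulZero M₀] {x : M₀} {q : ℕ} (hx : x ≠ 0) (h : x ^ q = x) :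
    x ^ (q - 1) = 1 := by
  cases q with
  | zero => simp
  | succ q => exact mul_right_cancel₀ hx (by rwa [one_mul, ← pow_succ])

theorem bijOn_pow_of_coprime {F : Type*} [CommGroupWithZero F] [Finite F] {q d : ℕ} (hd : d ≠ 0)
    (h : d.Coprime (q - 1)) : Set.BijOn (fun y : F => y ^ d) {y | y ^ q = y} {y | y ^ q = y} := by
  have hmaps : Set.MapsTo (fun y : F => y ^ d) {y | y ^ q = y} {y | y ^ q = y} :=
    fun y (hy : y ^ q = y) => show (y ^ d) ^ q = y ^ d by rw [← pow_mul, mul_comm, pow_mul, hy]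
  refine ((Set.toFinite _).injOn_iff_bijOn_of_mapsTo hmaps).mp fun x (hx : x ^ q = x) y
    (hy : y ^ q = y) (hxy : x ^ d = y ^ d) => ?_
  by_cases hy0 : y = 0
  · rw [hy0, zero_pow hd, pow_eq_zero_iff hd] at hxy
    rw [hxy, hy0]
  have hx0 : x ≠ 0 := by
    rintro rfl
    rw [zero_pow hd, eq_comm, pow_eq_zero_iff hd] at hxy
    exact hy0 hxy
  have hd1 : (x / y) ^ d = 1 := by rw [div_pow, hxy, div_self (pow_ne_zero d hy0)]
  have hq1 : (x / y) ^ (q - 1) = 1 :=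
    pow_pred_eq_one_of_pow_eq_self (div_ne_zero hx0 hy0) (by rw [div_pow, hx, hy])
  have := (pow_gcd_eq_one ..).mpr ⟨hd1, hq1⟩
  rwa [h, pow_one, div_eq_one_iff_eq hy0] at this

namespace FiniteField

variable {F : Type*} [Field F] [Fintype F] {q : ℕ}

theorem card_units_of_card_eq_sq (hF : Fintype.card F = q ^ 2) :
    Nat.card Fˣ = (q + 1) * (q - 1) := by
  rw [Nat.card_units, Nat.card_eq_fintype_card, hF, ← Nat.sq_sub_sq, one_pow]

theorem card_ker_powMonoidHom_pred (hF : Fintype.card F = q ^ 2) :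
    Nat.card (powMonoidHom (q - 1) : Fˣ →* Fˣ).ker = q - 1 := by
  rw [IsCyclic.card_powMonoidHom_ker, card_units_of_card_eq_sq hF, Nat.gcd_mul_left_left]

theorem exists_pow_ne_self (hF : Fintype.card F = q ^ 2) (hq : 2 ≤ q) :
    ∃ α : F, α ^ q ≠ α := by
  by_contra! h
  have htop : (powMonoidHom (q - 1) : Fˣ →* Fˣ).ker = ⊤ := eq_top_iff.mpr fun u _ =>
    Units.ext (pow_pred_eq_one_of_pow_eq_self u.ne_zero (h u))
  have := card_ker_powMonoidHom_pred hF
  rw [htop, Subgroup.card_top, card_units_of_card_eq_sq hF, mul_eq_right₀ (by omega)] at this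
  omega

theorem sum_eq_add_sum_units [DecidableEq F] {M : Type*} [AddCommMonoid M] (f : F → M) :
    ∑ x, f x = f 0 + ∑ u : Fˣ, f u := by
  rw [← add_sum_erase _ _ (mem_univ 0)]
  congr 1
  exact sum_bij' (fun x hx => Units.mk0 x (ne_of_mem_erase hx)) (fun u _ => u)
    (fun _ _ => mem_univ _) (fun u _ => mem_erase.mpr ⟨u.ne_zero, mem_univ _⟩)
    (fun _ _ => rfl) (fun _ _ => Units.mk0_val _ _) (fun _ _ => rfl)

theorem sum_comp_pow_succ_of_card_eq_sq [DecidableEq F] {M : Type*} [AddCommMonoid M]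
    (hF : Fintype.card F = q ^ 2) (g : F → M) :
    ∑ x, g (x ^ (q + 1)) =
      g 0 + (q + 1) • ∑ u : (powMonoidHom (q - 1) : Fˣ →* Fˣ).ker, g (u : Fˣ) := by
  rw [sum_eq_add_sum_units, zero_pow q.succ_ne_zero]
  congr 1
  exact IsCyclic.sum_comp_pow_eq_nsmul_sum_ker (card_units_of_card_eq_sq hF) fun u : Fˣ => g u

end FiniteField

theorem chr_eq_one_or_neg_one (b : ZMod 2) : chr b = 1 ∨ chr b = -1 := by
  unfold chr
  split_ifs <;> simp

theorem walshF_zero (f : K → ZMod 2) : walshF f 0 = ∑ x, chr (f x) := by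
  simp [walshF, tr]

theorem not_isBentF_const {k : ℕ} (hk : 0 < k) (hK : Fintype.card K = 2 ^ (2 * k)) (b : ZMod 2) :
    ¬ IsBentF k (fun _ : K => b) := by
  intro hbent
  have h := hbent 0
  have hq : (2 : ℤ) ≤ 2 ^ k := by exact_mod_cast Nat.le_self_pow hk.ne' 2
  simp only [walshF_zero, sum_const, card_univ, hK, nsmul_eq_mul, pow_mul', Nat.cast_pow] at h
  rcases chr_eq_one_or_neg_one b with hc | hc <;> rw [hc] at h <;> push_cast at h <;>
    rcases h with h | h <;> nlinarith

theorem walshF_zero_trace_mul_pow [DecidableEq K] {q d : ℕ} (hK : Fintype.card K = q ^ 2)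
    (hd : d ≠ 0) (α : K) :
    walshF (fun x => tr (α * x ^ (d * (q + 1)))) 0 =
      1 + (q + 1) *
        ∑ u : (powMonoidHom (q - 1) : Kˣ →* Kˣ).ker, chr (tr (α * ((u : Kˣ) : K) ^ d)) := by
  simp_rw [walshF_zero, mul_comm d, pow_mul]
  rw [FiniteField.sum_comp_pow_succ_of_card_eq_sq hK fun y => chr (tr (α * y ^ d))]
  simp [zero_pow hd, tr, chr]

theorem Int.eq_neg_one_of_one_add_mul_eq {q s : ℤ} (hq : 2 ≤ q)
    (h : 1 + (q + 1) * s = q ∨ 1 + (q + 1) * s = -q) : s = -1 := by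
  rcases h with h | h
  · rcases le_or_gt s 0 with hs | hs <;> nlinarith
  · have : (q + 1) * (s + 1) = 0 := by linarith
    rcases mul_eq_zero.mp this with h' | h' <;> linarith

theorem sum_chr_trace_mul_pow_eq_neg_one_of_isBentF [DecidableEq K] {k d : ℕ} (hk : 0 < k)
    (hK : Fintype.card K = (2 ^ k) ^ 2) (hd : d ≠ 0) {α : K}
    (hbent : IsBentF k (fun x => tr (α * x ^ (d * (2 ^ k + 1))))) :
    ∑ u : (powMonoidHom (2 ^ k - 1) : Kˣ →* Kˣ).ker, chr (tr (α * ((u : Kˣ) : K) ^ d)) =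
      -1 := by
  have h := hbent 0
  rw [walshF_zero_trace_mul_pow hK hd] at h
  push_cast at h
  exact Int.eq_neg_one_of_one_add_mul_eq (by exact_mod_cast Nat.le_self_pow hk.ne' 2) h

theorem stmt5 (k : ℕ) (hk : 0 < k) (hcard : Fintype.card K = 2 ^ (2 * k)) (d : ℕ)
    (hbent : ∀ α : K, α ^ (2 ^ k) ≠ α →
      IsBentF k (fun x => tr (α * x ^ (d * (2 ^ k + 1))))) :
    Nat.gcd d (2 ^ k - 1) = 1 ∧
      Set.BijOn (fun y => y ^ d) {y : K | y ^ (2 ^ k) = y} {y : K | y ^ (2 ^ k) = y} := by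
  classical
  have hK : Fintype.card K = (2 ^ k) ^ 2 := by rw [hcard, ← pow_mul, mul_comm]
  obtain ⟨α, hα⟩ := FiniteField.exists_pow_ne_self hK (Nat.le_self_pow hk.ne' 2)
  have hd : d ≠ 0 := by
    rintro rfl
    exact not_isBentF_const hk hcard (tr α)
      (by simpa only [zero_mul, pow_zero, mul_one] using hbent α hα)
  have hS := sum_chr_trace_mul_pow_eq_neg_one_of_isBentF hk hK hd (hbent α hα)
  have hdvd := IsCyclic.gcd_card_dvd_sum_comp_pow d
    fun u : (powMonoidHom (2 ^ k - 1) : Kˣ →* Kˣ).ker => chr (tr (α * ((u : Kˣ) : K)))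
  simp only [Subgroup.coe_pow, Units.val_pow_eq_pow_val, hS,
    FiniteField.card_ker_powMonoidHom_pred hK] at hdvd
  have hgcd : d.gcd (2 ^ k - 1) = 1 := by
    rw [Nat.gcd_comm]
    exact Nat.dvd_one.mp (Int.natCast_dvd_natCast.mp (by simpa using hdvd))
  exact ⟨hgcd, bijOn_pow_of_coprime hd hgcd⟩
end

section
/- Let n = 2k, e a divisor of k, and F^i(x) = x^{2^i} h(Tr^n_e(x)) where h : F_{2^e} → F_{2^e}. If e < k, then F^i has no bent components at all: for every nonzero α ∈ F_{2^n}, the function x ↦ Tr^n_1(αF^i(x)) is not bent. -/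
open Finset

variable {K : Type*} [Field K] [Fintype K] [Algebra (ZMod 2) K]

/-- The relative trace `Tr^n_e : F_{2^n} → F_{2^e}` for `e ∣ n`, `n = 2k`:
`x ↦ ∑_{j < n/e} x^{2^{ej}}`. -/
noncomputable def relTr (k e : ℕ) (x : K) : K :=
  ∑ j ∈ Finset.range (2 * k / e), x ^ (2 ^ (e * j))


/-! If `a ≠ 0` satisfies `Tr^n_e(a) = 0` and `Tr^n_1(α a^{2^i} t) = 0` for all `t ∈ F_{2^e}`,
then, because `h` maps `F_{2^e}` into itself, `x ↦ Tr^n_1(α F^i(x))` is invariant under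
`x ↦ x + a`. Such an `a` exists because these are at most `2e < n` linear conditions on `a`.
A function with a nonzero period `a` has Walsh value `0` at every `l` with `Tr^n_1(l a) = 1`,
so it is not bent. -/

instance : CharP K 2 := charP_of_injective_algebraMap' (ZMod 2) 2

lemma chr_add_one : ∀ b : ZMod 2, chr (b + 1) = -chr b := by decide

omit [Fintype K] in
lemma tr_add (x y : K) : tr (x + y) = tr x + tr y := map_add _ x y

lemma exists_tr_eq_one : ∃ y : K, tr y = 1 := Algebra.trace_surjective (ZMod 2) K 1

lemma walshF_eq_zero_of_periodic {f : K → ZMod 2} {a l : K} (hf : Function.Periodic f a)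
    (hla : tr (l * a) = 1) : walshF f l = 0 := by
  have hflip : ∀ x, chr (f (x + a) + tr (l * (x + a))) = -chr (f x + tr (l * x)) := fun x => by
    rw [hf x, mul_add, tr_add, hla, ← add_assoc, chr_add_one]
  have h : walshF f l = -walshF f l := by
    calc walshF f l = ∑ x, chr (f (x + a) + tr (l * (x + a))) :=
          (Fintype.sum_equiv (Equiv.addRight a) _ _ fun _ => rfl).symm
      _ = -walshF f l := by simp only [hflip, Finset.sum_neg_distrib, walshF]
  linarith

lemma IsBentF.not_periodic {k : ℕ} {f : K → ZMod 2} (hf : IsBentF k f) {a : K} (ha : a ≠ 0) :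
    ¬ Function.Periodic f a := by
  intro hper
  obtain ⟨y, hy⟩ := exists_tr_eq_one (K := K)
  have hW := walshF_eq_zero_of_periodic hper (l := y * a⁻¹) (by rwa [inv_mul_cancel_right₀ ha])
  have : (0 : ℤ) < 2 ^ k := by positivity
  rcases hf (y * a⁻¹) with h | h <;> omega

noncomputable def frobeniusLin (e : ℕ) : K →ₗ[ZMod 2] K :=
  (iterateFrobenius K 2 e).toAddMonoidHom.toZModLinearMap 2

@[simp] lemma frobeniusLin_apply (e : ℕ) (x : K) : frobeniusLin e x = x ^ 2 ^ e := rfl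

/-- The paper's `F_{2^e}` (when `e ∣ n`), as an `F_2`-subspace of `K = F_{2^n}`. -/
noncomputable def fixedSubspace (e : ℕ) : Submodule (ZMod 2) K :=
  LinearMap.eqLocus (frobeniusLin e) LinearMap.id

lemma mem_fixedSubspace {e : ℕ} {x : K} : x ∈ fixedSubspace e ↔ x ^ 2 ^ e = x := Iff.rfl

lemma card_filter_pow_eq_self_le {R : Type*} [Field R] [Fintype R] [DecidableEq R]
    {n : ℕ} (hn : 1 < n) : #{x : R | x ^ n = x} ≤ n := by
  open Polynomial in
  calc #{x : R | x ^ n = x} ≤ (X ^ n - X : R[X]).natDegree :=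
        card_le_degree_of_subset_roots fun x hx => by
          rw [mem_roots (FiniteField.X_pow_card_sub_X_ne_zero R hn)]
          simpa [sub_eq_zero] using hx
    _ = n := FiniteField.X_pow_card_sub_X_natDegree_eq R hn

lemma finrank_eq_of_card_eq {n : ℕ} (hcard : Fintype.card K = 2 ^ n) :
    Module.finrank (ZMod 2) K = n := by
  rw [Module.card_eq_pow_finrank (K := ZMod 2), ZMod.card] at hcard
  exact Nat.pow_right_injective le_rfl hcard

lemma finrank_fixedSubspace_le {e : ℕ} (he : e ≠ 0) :
    Module.finrank (ZMod 2) (fixedSubspace (K := K) e) ≤ e := by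
  classical
  have hcard : 2 ^ Module.finrank (ZMod 2) (fixedSubspace (K := K) e) ≤ 2 ^ e :=
    calc 2 ^ Module.finrank (ZMod 2) (fixedSubspace (K := K) e)
        = Fintype.card (fixedSubspace (K := K) e) := by
          rw [Module.card_eq_pow_finrank (K := ZMod 2), ZMod.card]
      _ = #{x : K | x ^ 2 ^ e = x} := Fintype.card_subtype _
      _ ≤ 2 ^ e := card_filter_pow_eq_self_le (Nat.one_lt_two_pow he)
  exact (Nat.pow_le_pow_iff_right one_lt_two).mp hcard

section RelativeTrace

variable {k e : ℕ}

variable (k e) in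
noncomputable def relTrLin : K →ₗ[ZMod 2] K :=
  ∑ j ∈ range (2 * k / e), frobeniusLin (e * j)

lemma relTrLin_apply (x : K) : relTrLin k e x = relTr k e x := by
  simp [relTrLin, relTr, LinearMap.sum_apply]

lemma relTr_add (x y : K) : relTr k e (x + y) = relTr k e x + relTr k e y := by
  simp only [← relTrLin_apply, map_add]

lemma relTr_mem_fixedSubspace (hdvd : e ∣ 2 * k) (hcard : Fintype.card K = 2 ^ (2 * k))
    (x : K) : relTr k e x ∈ fixedSubspace e := by
  have hwrap : x ^ 2 ^ (e * (2 * k / e)) = x ^ 2 ^ (e * 0) := by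
    rw [Nat.mul_div_cancel' hdvd, ← hcard, FiniteField.pow_card, mul_zero, pow_zero, pow_one]
  have hshift := Finset.sum_range_succ' (fun j => x ^ 2 ^ (e * j)) (2 * k / e)
  rw [Finset.sum_range_succ, hwrap] at hshift
  rw [mem_fixedSubspace]
  calc relTr k e x ^ 2 ^ e = ∑ j ∈ range (2 * k / e), x ^ 2 ^ (e * (j + 1)) := by
        rw [relTr, ← frobeniusLin_apply, map_sum]
        simp [← pow_mul, ← pow_add, mul_add]
    _ = relTr k e x := add_right_cancel hshift.symm

end RelativeTrace

lemma exists_ne_zero_relTr_eq_zero_and_tr_eq_zero {k e : ℕ} (he : e ≠ 0) (hdvd : e ∣ 2 * k)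
    (hlt : e < k) (hcard : Fintype.card K = 2 ^ (2 * k)) (β : K) (i : ℕ) :
    ∃ a : K, a ≠ 0 ∧ relTr k e a = 0 ∧ ∀ t ∈ fixedSubspace e, tr (β * a ^ 2 ^ i * t) = 0 := by
  set E := fixedSubspace (K := K) e
  let L : K →ₗ[ZMod 2] E × Module.Dual (ZMod 2) E :=
    ((relTrLin k e).codRestrict E fun x => by
        simpa only [relTrLin_apply] using relTr_mem_fixedSubspace hdvd hcard x).prod
      (E.subtype.dualMap ∘ₗ Algebra.traceForm (ZMod 2) K ∘ₗ LinearMap.mulLeft (ZMod 2) β ∘ₗ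
        frobeniusLin i)
  have hrank : Module.finrank (ZMod 2) (E × Module.Dual (ZMod 2) E) <
      Module.finrank (ZMod 2) K := by
    rw [Module.finrank_prod, Subspace.dual_finrank_eq, finrank_eq_of_card_eq hcard]
    have hE : Module.finrank (ZMod 2) E ≤ e := finrank_fixedSubspace_le he
    omega
  obtain ⟨a, ha, ha0⟩ := (Submodule.ne_bot_iff _).mp (LinearMap.ker_ne_bot_of_finrank_lt hrank)
  have hLa : L a = 0 := ha
  refine ⟨a, ha0, ?_, fun t ht => ?_⟩
  · simpa [L, relTrLin_apply] using congrArg (fun p => (p.1 : K)) hLa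
  · simpa [L, Algebra.traceForm_apply, tr, mul_assoc] using
      congrArg (fun p => p.2 ⟨t, ht⟩) hLa

lemma periodic_of_relTr_eq_zero {k e : ℕ} (hdvd : e ∣ 2 * k)
    (hcard : Fintype.card K = 2 ^ (2 * k)) {h : K → K}
    (hsub : ∀ a : K, a ^ 2 ^ e = a → h a ^ 2 ^ e = h a) (α : K) (i : ℕ) {a : K}
    (ha : relTr k e a = 0) (htr : ∀ t ∈ fixedSubspace e, tr (α * a ^ 2 ^ i * t) = 0) :
    Function.Periodic (fun x => tr (α * (x ^ 2 ^ i * h (relTr k e x)))) a := by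
  intro x
  have hh : h (relTr k e x) ∈ fixedSubspace e :=
    hsub _ (relTr_mem_fixedSubspace hdvd hcard x)
  simp only [relTr_add, ha, add_zero, add_pow_char_pow, add_mul, mul_add, tr_add]
  rw [← mul_assoc α (a ^ 2 ^ i), htr _ hh, add_zero]

theorem stmt11_general (k e i : ℕ) (hek : e ∣ k) (helt : e < k)
    (hcard : Fintype.card K = 2 ^ (2 * k))
    (h : K → K)
    (hsub : ∀ a : K, a ^ (2 ^ e) = a → (h a) ^ (2 ^ e) = h a) :
    ∀ α : K, α ≠ 0 →
      ¬ IsBentF k (fun x => tr (α * (x ^ (2 ^ i) * h (relTr k e x)))) := by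
  intro α _ hbent
  have he : e ≠ 0 := by
    rintro rfl
    rw [zero_dvd_iff] at hek
    omega
  have hdvd : e ∣ 2 * k := hek.mul_left 2
  obtain ⟨a, ha0, ha, htr⟩ :=
    exists_ne_zero_relTr_eq_zero_and_tr_eq_zero he hdvd helt hcard α i
  exact hbent.not_periodic ha0 (periodic_of_relTr_eq_zero hdvd hcard hsub α i ha htr)

theorem stmt11 (k e i : ℕ) (he : 0 < e) (hek : e ∣ k) (helt : e < k)
    (hcard : Fintype.card K = 2 ^ (2 * k))
    (h : K → K)
    (hsub : ∀ a : K, a ^ (2 ^ e) = a → (h a) ^ (2 ^ e) = h a) :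
    ∀ α : K, α ≠ 0 →
      ¬ IsBentF k (fun x => tr (α * (x ^ (2 ^ i) * h (relTr k e x)))) :=
  stmt11_general k e i hek helt hcard h hsub
end
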